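/- Let f : ℝ^{n×r} → ℝ be differentiable, X ∈ ℝ^{n×r}, and α, β, δ > 0. Suppose f satisfies the regularity condition RC(α, β, δ): for every U with dist(U, X) ≤ δ, ⟨∇f(U), U − XR_U⟩ ≥ (1/α)‖U − XR_U‖_F² + (1/β)‖∇f(U)‖_F², where R_U is an orthogonal matrix minimizing ‖U − XR‖_F over R with RᵀR = I_r. If dist(U₀, X) ≤ δ and U_{τ+1} = U_τ − μ∇f(U_τ) with step size 0 < μ ≤ 2/β, then for every τ ≥ 0, dist(U_τ, X) ≤ δ and dist²(U_τ, X) ≤ (1 − 2μ/α)^τ · dist²(U₀, X). -/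

import Mathlib

/-! At a rotation `R` attaining `dist(U, X)`, expanding
`‖U - μ G - X R‖² = ‖U - X R‖² - 2μ⟨G, U - X R⟩ + μ²‖G‖²` and bounding the cross term by the
regularity condition gives `dist²(U - μ G, X) ≤ (1 - 2μ/α) dist²(U, X) - μ (2/β - μ) ‖G‖²`, and
`μ ≤ 2/β` makes the last term nonpositive. The contraction factor is at most `1`, so the iterates
never leave the `δ`-ball on which the condition holds. Optimal rotations exist because the
orthogonal group is compact. -/

open Matrix

noncomputable def vnorm {ι : Type*} [Fintype ι] (v : ι → ℝ) : ℝ :=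
  Real.sqrt (∑ i, v i ^ 2)

noncomputable def frob {α β : Type*} [Fintype α] [Fintype β] (M : Matrix α β ℝ) : ℝ :=
  Real.sqrt (∑ i, ∑ j, M i j ^ 2)

noncomputable def sval {α β : Type*} [Fintype α] [Fintype β] (M : Matrix α β ℝ) (k : ℕ) : ℝ :=
  sSup { t : ℝ | ∃ V : Submodule ℝ (β → ℝ), Module.finrank ℝ V = k ∧
    ∀ v ∈ V, t * vnorm v ≤ vnorm (M.mulVec v) }

noncomputable def opNorm {α β : Type*} [Fintype α] [Fintype β] (M : Matrix α β ℝ) : ℝ :=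
  sval M 1

noncomputable def pdist {α ρ : Type*} [Fintype α] [Fintype ρ] [DecidableEq ρ]
    (U X : Matrix α ρ ℝ) : ℝ :=
  sInf { d : ℝ | ∃ R : Matrix ρ ρ ℝ, Rᵀ * R = 1 ∧ d = frob (U - X * R) }

noncomputable def mip {α β : Type*} [Fintype α] [Fintype β] (A B : Matrix α β ℝ) : ℝ :=
  ∑ i, ∑ j, A i j * B i j

noncomputable def mapA {m : ℕ} {α β : Type*} [Fintype α] [Fintype β]
    (A : Fin m → Matrix α β ℝ) (Z : Matrix α β ℝ) : Fin m → ℝ :=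
  fun k => mip (A k) Z

def HasRIP {m n₁ n₂ : ℕ} (A : Fin m → Matrix (Fin n₁) (Fin n₂) ℝ) (s : ℕ) (δ : ℝ) : Prop :=
  ∀ Z : Matrix (Fin n₁) (Fin n₂) ℝ, Z.rank ≤ s →
    (1 - δ) * frob Z ^ 2 ≤ ∑ k, mapA A Z k ^ 2 ∧
      ∑ k, mapA A Z k ^ 2 ≤ (1 + δ) * frob Z ^ 2

noncomputable def gradU {m n₁ n₂ r : ℕ} (A : Fin m → Matrix (Fin n₁) (Fin n₂) ℝ)
    (M : Matrix (Fin n₁) (Fin n₂) ℝ)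
    (U : Matrix (Fin n₁) (Fin r) ℝ) (V : Matrix (Fin n₂) (Fin r) ℝ) :
    Matrix (Fin n₁) (Fin r) ℝ :=
  (∑ k, mip (A k) (U * Vᵀ - M) • (A k * V)) + (1 / 4 : ℝ) • (U * (Uᵀ * U - Vᵀ * V))

noncomputable def gradV {m n₁ n₂ r : ℕ} (A : Fin m → Matrix (Fin n₁) (Fin n₂) ℝ)
    (M : Matrix (Fin n₁) (Fin n₂) ℝ)
    (U : Matrix (Fin n₁) (Fin r) ℝ) (V : Matrix (Fin n₂) (Fin r) ℝ) :
    Matrix (Fin n₂) (Fin r) ℝ :=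
  (∑ k, mip (A k) (U * Vᵀ - M) • ((A k)ᵀ * U)) + (1 / 4 : ℝ) • (V * (Vᵀ * V - Uᵀ * U))

noncomputable def gradg {m n₁ n₂ r : ℕ} (A : Fin m → Matrix (Fin n₁) (Fin n₂) ℝ)
    (M : Matrix (Fin n₁) (Fin n₂) ℝ)
    (U : Matrix (Fin n₁) (Fin r) ℝ) (V : Matrix (Fin n₂) (Fin r) ℝ) :
    Matrix (Fin n₁ ⊕ Fin n₂) (Fin r) ℝ :=
  Matrix.fromRows (gradU A M U V) (gradV A M U V)

attribute [local instance] Matrix.normedAddCommGroup Matrix.normedSpace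

section Frobenius

variable {ι κ : Type*} [Fintype ι] [Fintype κ]

lemma frob_nonneg (M : Matrix ι κ ℝ) : 0 ≤ frob M := Real.sqrt_nonneg _

lemma sq_frob (M : Matrix ι κ ℝ) : frob M ^ 2 = ∑ i, ∑ j, M i j ^ 2 :=
  Real.sq_sqrt (by positivity)

lemma continuous_frob : Continuous (frob : Matrix ι κ ℝ → ℝ) := by
  unfold frob
  fun_prop

lemma sq_frob_sub_smul (D G : Matrix ι κ ℝ) (c : ℝ) :
    frob (D - c • G) ^ 2 = frob D ^ 2 - 2 * c * mip G D + c ^ 2 * frob G ^ 2 := by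
  have hentry : ∀ i j, (D - c • G) i j ^ 2 =
      D i j ^ 2 - 2 * c * (G i j * D i j) + c ^ 2 * G i j ^ 2 := fun i j => by
    simp only [Matrix.sub_apply, Matrix.smul_apply, smul_eq_mul]
    ring
  simp_rw [sq_frob, mip, hentry, Finset.sum_add_distrib, Finset.sum_sub_distrib, ← Finset.mul_sum]

end Frobenius

lemma isCompact_setOf_transpose_mul_self_eq_one (ρ : Type*) [Fintype ρ] [DecidableEq ρ] :
    IsCompact {R : Matrix ρ ρ ℝ | Rᵀ * R = 1} := by
  refine Metric.isCompact_of_isClosed_isBounded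
    (isClosed_eq (continuous_id.matrix_transpose.matrix_mul continuous_id) continuous_const) ?_
  refine (Metric.isBounded_closedBall (x := (0 : Matrix ρ ρ ℝ)) (r := 1)).subset fun R hR => ?_
  have hR' : R ∈ Matrix.orthogonalGroup ρ ℝ := (Matrix.mem_orthogonalGroup_iff' ρ ℝ).2 hR
  simpa using entrywise_sup_norm_bound_of_unitary hR'

section ProcrustesDistance

variable {ι ρ : Type*} [Fintype ι] [Fintype ρ] [DecidableEq ρ]

lemma pdist_nonneg (U X : Matrix ι ρ ℝ) : 0 ≤ pdist U X :=
  Real.sInf_nonneg <| by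
    rintro d ⟨R, -, rfl⟩
    exact frob_nonneg _

lemma pdist_le_frob (U X : Matrix ι ρ ℝ) {R : Matrix ρ ρ ℝ} (hR : Rᵀ * R = 1) :
    pdist U X ≤ frob (U - X * R) :=
  csInf_le ⟨0, by rintro d ⟨R', -, rfl⟩; exact frob_nonneg _⟩ ⟨R, hR, rfl⟩

lemma exists_pdist_eq_frob (U X : Matrix ι ρ ℝ) :
    ∃ R : Matrix ρ ρ ℝ, Rᵀ * R = 1 ∧ pdist U X = frob (U - X * R) := by
  have hcompact : IsCompact ((fun R => frob (U - X * R)) '' {R : Matrix ρ ρ ℝ | Rᵀ * R = 1}) :=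
    (isCompact_setOf_transpose_mul_self_eq_one ρ).image <|
      continuous_frob.comp (continuous_const.sub (continuous_const.matrix_mul continuous_id))
  obtain ⟨R, hR, hRmin⟩ := hcompact.sInf_mem ⟨_, 1, by simp, rfl⟩
  beta_reduce at hRmin
  refine ⟨R, hR, ?_⟩
  rw [hRmin, pdist]
  congr 1
  ext d
  exact ⟨fun ⟨R', hR', hd⟩ => ⟨R', hR', hd.symm⟩, fun ⟨R', hR', hd⟩ => ⟨R', hR', hd.symm⟩⟩

lemma sq_pdist_sub_smul_le {U X G : Matrix ι ρ ℝ} {R : Matrix ρ ρ ℝ} (hR : Rᵀ * R = 1)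
    (hpdist : pdist U X = frob (U - X * R)) {α β μ : ℝ} (hμ0 : 0 ≤ μ) (hμ : μ ≤ 2 / β)
    (hreg : (1 / α) * frob (U - X * R) ^ 2 + (1 / β) * frob G ^ 2 ≤ mip G (U - X * R)) :
    pdist (U - μ • G) X ^ 2 ≤ (1 - 2 * μ / α) * pdist U X ^ 2 := by
  have hstep : U - μ • G - X * R = (U - X * R) - μ • G := sub_right_comm _ _ _
  have hμsq : μ ^ 2 * frob G ^ 2 ≤ μ * (2 / β) * frob G ^ 2 := by
    rw [sq μ]; gcongr
  calc pdist (U - μ • G) X ^ 2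
      ≤ frob ((U - X * R) - μ • G) ^ 2 := by
        rw [← hstep]; gcongr; exacts [pdist_nonneg _ _, pdist_le_frob _ _ hR]
    _ = frob (U - X * R) ^ 2 - 2 * μ * mip G (U - X * R) + μ ^ 2 * frob G ^ 2 :=
        sq_frob_sub_smul _ _ _
    _ ≤ (1 - 2 * μ / α) * pdist U X ^ 2 := by
        rw [hpdist]
        linear_combination mul_le_mul_of_nonneg_left hreg (by positivity : (0 : ℝ) ≤ 2 * μ) + hμsq

end ProcrustesDistance

/- No sign condition on `c` is needed: for `c < 0`, `a 1 ≤ c * a 0` forces `a 0 = 0`, and then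
the whole sequence vanishes. -/
lemma le_pow_mul_of_le_mul {a : ℕ → ℝ} {c : ℝ} (ha : ∀ t, 0 ≤ a t)
    (hstep : ∀ t, a (t + 1) ≤ c * a t) (t : ℕ) : a t ≤ c ^ t * a 0 := by
  rcases le_or_gt 0 c with hc | hc
  · induction t with
    | zero => simp
    | succ t ih =>
      calc a (t + 1) ≤ c * a t := hstep t
        _ ≤ c * (c ^ t * a 0) := by gcongr
        _ = c ^ (t + 1) * a 0 := by ring
  · have hzero : ∀ t, a t = 0 := by
      have h0 : a 0 = 0 := by nlinarith [ha 0, ha 1, hstep 0]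
      intro t
      induction t with
      | zero => exact h0
      | succ t ih => exact le_antisymm (by simpa [ih] using hstep t) (ha _)
    simp [hzero]

theorem regularity_condition_implies_convergence_general {n r : ℕ}
    (gradf : Matrix (Fin n) (Fin r) ℝ → Matrix (Fin n) (Fin r) ℝ)
    (X : Matrix (Fin n) (Fin r) ℝ) (α β δ : ℝ)
    (hα : 0 < α)
    (hRC : ∀ U : Matrix (Fin n) (Fin r) ℝ, pdist U X ≤ δ →
      ∀ R : Matrix (Fin r) (Fin r) ℝ, Rᵀ * R = 1 →
      (∀ R' : Matrix (Fin r) (Fin r) ℝ, R'ᵀ * R' = 1 →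
        frob (U - X * R) ≤ frob (U - X * R')) →
      (1 / α) * frob (U - X * R) ^ 2 + (1 / β) * frob (gradf U) ^ 2 ≤
        mip (gradf U) (U - X * R))
    (μ : ℝ) (hμ0 : 0 < μ) (hμ : μ ≤ 2 / β)
    (U : ℕ → Matrix (Fin n) (Fin r) ℝ) (h0 : pdist (U 0) X ≤ δ)
    (hiter : ∀ τ : ℕ, U (τ + 1) = U τ - μ • gradf (U τ)) :
    ∀ τ : ℕ, pdist (U τ) X ≤ δ ∧
      pdist (U τ) X ^ 2 ≤ (1 - 2 * μ / α) ^ τ * pdist (U 0) X ^ 2 := by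
  have hstep : ∀ τ, pdist (U τ) X ≤ δ →
      pdist (U (τ + 1)) X ^ 2 ≤ (1 - 2 * μ / α) * pdist (U τ) X ^ 2 := fun τ hτ => by
    obtain ⟨R, hR, hpdist⟩ := exists_pdist_eq_frob (U τ) X
    have hmin : ∀ R' : Matrix (Fin r) (Fin r) ℝ, R'ᵀ * R' = 1 →
        frob (U τ - X * R) ≤ frob (U τ - X * R') :=
      fun R' hR' => hpdist ▸ pdist_le_frob _ _ hR'
    rw [hiter τ]
    exact sq_pdist_sub_smul_le hR hpdist hμ0.le hμ (hRC _ hτ R hR hmin)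
  have hfactor : 1 - 2 * μ / α ≤ 1 := by
    have : 0 < 2 * μ / α := by positivity
    linarith
  have hbound : ∀ τ, pdist (U τ) X ≤ δ := by
    intro τ
    induction τ with
    | zero => exact h0
    | succ τ ih =>
      have hsq : pdist (U (τ + 1)) X ^ 2 ≤ pdist (U τ) X ^ 2 :=
        (hstep τ ih).trans (mul_le_of_le_one_left (sq_nonneg _) hfactor)
      exact ((pow_le_pow_iff_left₀ (pdist_nonneg _ _) (pdist_nonneg _ _) two_ne_zero).1 hsq).trans ih
  exact fun τ => ⟨hbound τ, le_pow_mul_of_le_mul (a := fun t => pdist (U t) X ^ 2)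
    (fun _ => sq_nonneg _) (fun t => hstep t (hbound t)) τ⟩

/-- Regularity condition implies geometric convergence of gradient descent. -/
theorem regularity_condition_implies_convergence {n r : ℕ}
    (f : Matrix (Fin n) (Fin r) ℝ → ℝ) (hf : Differentiable ℝ f)
    (gradf : Matrix (Fin n) (Fin r) ℝ → Matrix (Fin n) (Fin r) ℝ)
    (hgrad : ∀ U H : Matrix (Fin n) (Fin r) ℝ, fderiv ℝ f U H = mip (gradf U) H)
    (X : Matrix (Fin n) (Fin r) ℝ) (α β δ : ℝ)
    (hα : 0 < α) (hβ : 0 < β) (hδ : 0 < δ)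
    (hRC : ∀ U : Matrix (Fin n) (Fin r) ℝ, pdist U X ≤ δ →
      ∀ R : Matrix (Fin r) (Fin r) ℝ, Rᵀ * R = 1 →
      (∀ R' : Matrix (Fin r) (Fin r) ℝ, R'ᵀ * R' = 1 →
        frob (U - X * R) ≤ frob (U - X * R')) →
      (1 / α) * frob (U - X * R) ^ 2 + (1 / β) * frob (gradf U) ^ 2 ≤
        mip (gradf U) (U - X * R))
    (μ : ℝ) (hμ0 : 0 < μ) (hμ : μ ≤ 2 / β)
    (U : ℕ → Matrix (Fin n) (Fin r) ℝ) (h0 : pdist (U 0) X ≤ δ)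
    (hiter : ∀ τ : ℕ, U (τ + 1) = U τ - μ • gradf (U τ)) :
    ∀ τ : ℕ, pdist (U τ) X ≤ δ ∧
      pdist (U τ) X ^ 2 ≤ (1 - 2 * μ / α) ^ τ * pdist (U 0) X ^ 2 :=
  regularity_condition_implies_convergence_general gradf X α β δ hα hRC μ hμ0 hμ U h0 hiter
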